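/- arXiv:2604.24056 — 2 statements merged into one kernel-verified Lean document; each statement's English description precedes it below -/
import Mathlib

section
/- Let (Ω, F, μ) be a probability space and let W₁, W₂ be real-valued random variables on Ω that are nonnegative μ-almost everywhere and exchangeable. Fix a real number γ with 0 < γ ≤ 1 and set M = W₁ − γ·W₂. Assume the distribution of M is continuous, i.e., μ{ω : M(ω) = t} = 0 for every t ∈ ℝ. Then for every s ≥ 0: μ{ω : M(ω) > s} = μ{ω : M(ω) < −s} + μ{ω : s ≤ M(ω) and M(ω) ≤ s/γ + (1/γ − γ)·W₂(ω)}. -/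
open MeasureTheory

/-- Two real random variables are exchangeable if the joint law of `(W₁, W₂)`
equals the joint law of `(W₂, W₁)`. -/
def Exchangeable {Ω : Type*} [MeasurableSpace Ω] (μ : Measure Ω) (W₁ W₂ : Ω → ℝ) : Prop :=
  Measure.map (fun ω => (W₁ ω, W₂ ω)) μ = Measure.map (fun ω => (W₂ ω, W₁ ω)) μ

/-!
With `N = γ W₁ - W₂`, exchangeability swaps `M = W₁ - γ W₂` into `-N`, so `μ {N > s} = μ {M < -s}`.
Since `M - N = (1 - γ)(W₁ + W₂)`, on `W₂ ≥ 0` the event `N > s ≥ 0` forces `M > s`; hence `{M > s}`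
splits into `{N > s}` and `{M > s, N ≤ s}`, and the latter is, up to the null set `{M = s}`, the
event `{s ≤ M ≤ s/γ + (1/γ - γ) W₂}` after multiplying its upper bound by `γ`.
-/

section

variable {Ω : Type*} [MeasurableSpace Ω] {μ : Measure Ω}

theorem Exchangeable.measure_preimage_swap {W₁ W₂ : Ω → ℝ} (h : Exchangeable μ W₁ W₂)
    (h₁ : AEMeasurable W₁ μ) (h₂ : AEMeasurable W₂ μ) {S : Set (ℝ × ℝ)} (hS : MeasurableSet S) :
    μ ((fun ω => (W₁ ω, W₂ ω)) ⁻¹' S) = μ ((fun ω => (W₂ ω, W₁ ω)) ⁻¹' S) := by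
  rw [← Measure.map_apply_of_aemeasurable (h₁.prodMk h₂) hS, h,
    Measure.map_apply_of_aemeasurable (h₂.prodMk h₁) hS]

theorem Exchangeable.measure_mirror_gt {W₁ W₂ : Ω → ℝ} (h : Exchangeable μ W₁ W₂)
    (h₁ : Measurable W₁) (h₂ : Measurable W₂) (γ s : ℝ) :
    μ {ω | s < γ * W₁ ω - W₂ ω} = μ {ω | W₁ ω - γ * W₂ ω < -s} := by
  have hS : MeasurableSet {p : ℝ × ℝ | p.1 - γ * p.2 < -s} :=
    measurableSet_lt (by fun_prop) measurable_const
  have hswap := h.measure_preimage_swap h₁.aemeasurable h₂.aemeasurable hS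
  simp only [Set.preimage_ofPred_eq] at hswap
  rw [hswap]
  congr 1
  ext ω
  simp only [Set.mem_ofPred_eq]
  constructor <;> intro <;> linarith

theorem measure_gt_eq_add_of_ae_imp {M N : Ω → ℝ} (hN : Measurable N) {s : ℝ}
    (hM : μ {ω | M ω = s} = 0) (hNM : ∀ᵐ ω ∂μ, s < N ω → s < M ω) :
    μ {ω | s < M ω} = μ {ω | s ≤ M ω ∧ N ω ≤ s} + μ {ω | s < N ω} := by
  have hMs : ∀ᵐ ω ∂μ, M ω ≠ s := by
    rw [ae_iff]
    simpa using hM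
  rw [← measure_inter_add_sdiff {ω | s < M ω} (measurableSet_le hN measurable_const)]
  congr 1 <;> apply measure_congr <;> rw [Filter.eventuallyEq_set]
  · filter_upwards [hMs] with ω hω
    simp only [Set.mem_inter_iff, Set.mem_ofPred_eq]
    exact and_congr_left fun _ => ⟨le_of_lt, fun h => lt_of_le_of_ne h (Ne.symm hω)⟩
  · filter_upwards [hNM] with ω hω
    simp only [Set.mem_sdiff, Set.mem_ofPred_eq, not_le]
    exact ⟨And.right, fun h => ⟨hω h, h⟩⟩

end

theorem sub_le_div_add_iff {γ : ℝ} (hγ : 0 < γ) (s w₁ w₂ : ℝ) :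
    w₁ - γ * w₂ ≤ s / γ + (1 / γ - γ) * w₂ ↔ γ * w₁ - w₂ ≤ s := by
  have key : s / γ + (1 / γ - γ) * w₂ - (w₁ - γ * w₂) = (s - (γ * w₁ - w₂)) / γ := by
    field_simp
    ring
  rw [← sub_nonneg, key, div_nonneg_iff]
  constructor
  · rintro (⟨h, -⟩ | ⟨-, h⟩) <;> linarith
  · intro h
    exact Or.inl ⟨by linarith, hγ.le⟩

theorem lt_sub_mul_of_lt_mul_sub {γ s w₁ w₂ : ℝ} (hγ₀ : 0 ≤ γ) (hγ : γ ≤ 1) (hs : 0 ≤ s)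
    (hw₂ : 0 ≤ w₂) (h : s < γ * w₁ - w₂) : s < w₁ - γ * w₂ := by
  have hw₁ : 0 ≤ w₁ := by
    by_contra! hw₁
    nlinarith [mul_nonpos_of_nonneg_of_nonpos hγ₀ hw₁.le]
  nlinarith [mul_nonneg (sub_nonneg.2 hγ) (add_nonneg hw₁ hw₂)]

theorem stmt_0_general {Ω : Type*} [MeasurableSpace Ω] (μ : Measure Ω)
    (W₁ W₂ : Ω → ℝ) (hW₁ : Measurable W₁) (hW₂ : Measurable W₂)
    (hW₂pos : ∀ᵐ ω ∂μ, 0 ≤ W₂ ω)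
    (hexch : Exchangeable μ W₁ W₂)
    (γ : ℝ) (hγpos : 0 < γ) (hγle : γ ≤ 1)
    (M : Ω → ℝ) (hM : M = fun ω => W₁ ω - γ * W₂ ω)
    (hcont : ∀ t : ℝ, μ {ω | M ω = t} = 0) :
    ∀ s : ℝ, 0 ≤ s →
      μ {ω | M ω > s} =
        μ {ω | M ω < -s} +
          μ {ω | s ≤ M ω ∧ M ω ≤ s / γ + (1 / γ - γ) * W₂ ω} := by
  intro s hs
  have hN : Measurable fun ω => γ * W₁ ω - W₂ ω := by fun_prop
  have hNM : ∀ᵐ ω ∂μ, s < γ * W₁ ω - W₂ ω → s < M ω := by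
    filter_upwards [hW₂pos] with ω hω
    subst hM
    exact lt_sub_mul_of_lt_mul_sub hγpos.le hγle hs hω
  have hmirror : {ω | s ≤ M ω ∧ M ω ≤ s / γ + (1 / γ - γ) * W₂ ω}
      = {ω | s ≤ M ω ∧ γ * W₁ ω - W₂ ω ≤ s} := by
    subst hM
    ext ω
    simp only [Set.mem_ofPred_eq, sub_le_div_add_iff hγpos]
  rw [hmirror, add_comm, hM, ← hexch.measure_mirror_gt hW₁ hW₂, ← hM]
  exact measure_gt_eq_add_of_ae_imp hN (hcont s) hNM

/-- Proposition 2 of the paper (bi-Gaussian mirror tail identity). -/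
theorem stmt_0 {Ω : Type*} [MeasurableSpace Ω] (μ : Measure Ω) [IsProbabilityMeasure μ]
    (W₁ W₂ : Ω → ℝ) (hW₁ : Measurable W₁) (hW₂ : Measurable W₂)
    (hW₁pos : ∀ᵐ ω ∂μ, 0 ≤ W₁ ω) (hW₂pos : ∀ᵐ ω ∂μ, 0 ≤ W₂ ω)
    (hexch : Exchangeable μ W₁ W₂)
    (γ : ℝ) (hγpos : 0 < γ) (hγle : γ ≤ 1)
    (M : Ω → ℝ) (hM : M = fun ω => W₁ ω - γ * W₂ ω)
    (hcont : ∀ t : ℝ, μ {ω | M ω = t} = 0) :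
    ∀ s : ℝ, 0 ≤ s →
      μ {ω | M ω > s} =
        μ {ω | M ω < -s} +
          μ {ω | s ≤ M ω ∧ M ω ≤ s / γ + (1 / γ - γ) * W₂ ω} :=
  stmt_0_general μ W₁ W₂ hW₁ hW₂ hW₂pos hexch γ hγpos hγle M hM hcont
end

section
/- Let (Ω, F, μ) be a probability space and let W₁, W₂ be real-valued random variables on Ω that are nonnegative μ-almost everywhere and exchangeable. Fix a real number γ with 0 < γ ≤ 1 and set M = W₁ − γ·W₂. Then for every s ≥ 0: μ{ω : M(ω) < −s} ≤ μ{ω : M(ω) > s}. -/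
/-! Swapping the roles of `W₁` and `W₂` maps the lower tail `{W₁ - γ W₂ < -s}` into the upper
tail `{W₂ - γ W₁ > s}`, because the two statistics differ by `(1 - γ)(W₁ + W₂) ≥ 0`; by
exchangeability that upper tail has the same measure as `{W₁ - γ W₂ > s}`. -/

open MeasureTheory

lemma Exchangeable.measure_swap_preimage {Ω : Type*} [MeasurableSpace Ω] {μ : Measure Ω}
    {W₁ W₂ : Ω → ℝ} (h : Exchangeable μ W₁ W₂) (hW₁ : Measurable W₁) (hW₂ : Measurable W₂)
    {S : Set (ℝ × ℝ)} (hS : MeasurableSet S) :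
    μ ((fun ω => (W₂ ω, W₁ ω)) ⁻¹' S) = μ ((fun ω => (W₁ ω, W₂ ω)) ⁻¹' S) := by
  rw [← Measure.map_apply (hW₂.prodMk hW₁) hS, ← Measure.map_apply (hW₁.prodMk hW₂) hS, h]

lemma lt_sub_mul_of_sub_mul_lt_neg {a b γ s : ℝ} (ha : 0 ≤ a) (hb : 0 ≤ b) (hγ : γ ≤ 1)
    (h : a - γ * b < -s) : s < b - γ * a := by
  nlinarith [mul_nonneg (sub_nonneg.mpr hγ) (add_nonneg ha hb)]

theorem stmt_3_general {Ω : Type*} [MeasurableSpace Ω] (μ : Measure Ω)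
    (W₁ W₂ : Ω → ℝ) (hW₁ : Measurable W₁) (hW₂ : Measurable W₂)
    (hW₁pos : ∀ᵐ ω ∂μ, 0 ≤ W₁ ω) (hW₂pos : ∀ᵐ ω ∂μ, 0 ≤ W₂ ω)
    (hexch : Exchangeable μ W₁ W₂)
    (γ : ℝ) (hγle : γ ≤ 1)
    (M : Ω → ℝ) (hM : M = fun ω => W₁ ω - γ * W₂ ω) :
    ∀ s : ℝ, 0 ≤ s → μ {ω | M ω < -s} ≤ μ {ω | M ω > s} := by
  subst hM
  intro s _
  have hS : MeasurableSet {p : ℝ × ℝ | s < p.1 - γ * p.2} :=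
    measurableSet_lt measurable_const (by fun_prop)
  calc μ {ω | W₁ ω - γ * W₂ ω < -s}
      ≤ μ {ω | s < W₂ ω - γ * W₁ ω} :=
        measure_mono_ae <| by
          filter_upwards [hW₁pos, hW₂pos] with ω h₁ h₂ hlt
          exact lt_sub_mul_of_sub_mul_lt_neg h₁ h₂ hγle hlt
    _ = μ {ω | s < W₁ ω - γ * W₂ ω} := hexch.measure_swap_preimage hW₁ hW₂ hS

/-- One-sided tail inequality for the bi-Gaussian mirror statistic: the lower tail
never exceeds the upper tail. -/
theorem stmt_3 {Ω : Type*} [MeasurableSpace Ω] (μ : Measure Ω) [IsProbabilityMeasure μ]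
    (W₁ W₂ : Ω → ℝ) (hW₁ : Measurable W₁) (hW₂ : Measurable W₂)
    (hW₁pos : ∀ᵐ ω ∂μ, 0 ≤ W₁ ω) (hW₂pos : ∀ᵐ ω ∂μ, 0 ≤ W₂ ω)
    (hexch : Exchangeable μ W₁ W₂)
    (γ : ℝ) (hγpos : 0 < γ) (hγle : γ ≤ 1)
    (M : Ω → ℝ) (hM : M = fun ω => W₁ ω - γ * W₂ ω) :
    ∀ s : ℝ, 0 ≤ s → μ {ω | M ω < -s} ≤ μ {ω | M ω > s} :=
  stmt_3_general μ W₁ W₂ hW₁ hW₂ hW₁pos hW₂pos hexch γ hγle M hM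
end
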